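/- arXiv:1311.3488 — 6 statements merged into one kernel-verified Lean document; each statement's English description precedes it below -/
import Mathlib

section
/- Let φ : M → M' and ψ : M' → M satisfy d'(φ(x),φ(y)) ≤ λ·d(x,y) + c and d(ψ(x'),ψ(y')) ≤ λ·d'(x',y') + c, with ψ∘φ and φ∘ψ both R-close to the identity. Then for every ε > 0, there exist a (R + 2λR + λc + λε + c)-net A ⊂ M and a net A' = φ(A) ⊂ M' such that the restriction of φ to A is a bi-Lipschitz bijection onto A' with bi-Lipschitz constant λ(1 + (2R+c)/ε). -/
def IsNet {M : Type*} [MetricSpace M] (K : ℝ) (A : Set M) : Prop :=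
  ∀ x : M, ∃ a ∈ A, dist x a ≤ K

/-!
Take a maximal `t`-separated set `A ⊆ M` with `t = ε + 2R + c`; it is a `t`-net. Since `ψ` is a
coarse left inverse of `φ`, `d(x, y) ≤ λ d'(φ x, φ y) + 2R + c`, so on `A`, where distinct points
are at least `ε + 2R + c` apart, the additive constants are absorbed into the multiplicative
factor `1 + (2R + c)/ε`. Since `ψ` is also a coarse right inverse, `φ(A)` is again a net.
-/

open Set
open scoped NNReal

theorem Metric.exists_isSeparated_isCover {X : Type*} [PseudoEMetricSpace X] (ε : ℝ≥0)
    (s : Set X) : ∃ N ⊆ s, IsSeparated ε N ∧ IsCover ε s N := by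
  obtain ⟨N, hN⟩ := zorn_subset {N : Set X | N ⊆ s ∧ IsSeparated ε N} fun C hC hchain =>
    ⟨⋃₀ C, ⟨sUnion_subset fun N hN => (hC hN).1,
      (pairwise_sUnion hchain.directedOn).2 fun N hN => (hC hN).2⟩,
      fun _ => subset_sUnion_of_mem⟩
  exact ⟨N, hN.1.1, hN.1.2, .of_maximal_isSeparated hN⟩

theorem add_le_mul_one_add_div {a D ε : ℝ} (hε : 0 < ε) (hD : 0 ≤ D) (ha : ε ≤ a) :
    a + D ≤ a * (1 + D / ε) := by
  have : D ≤ a * (D / ε) :=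
    calc D = ε * (D / ε) := by field_simp
      _ ≤ a * (D / ε) := by gcongr
  linarith

section MetricSpace

variable {M M' : Type*} [MetricSpace M] [MetricSpace M'] {φ : M → M'} {ψ : M' → M}
  {A : Set M} {K K' l c R D ε : ℝ}

theorem exists_pairwise_lt_dist_isNet (ht : 0 ≤ K) :
    ∃ A : Set M, A.Pairwise (fun x y => K < dist x y) ∧ IsNet K A := by
  lift K to ℝ≥0 using ht
  obtain ⟨A, -, hsep, hcover⟩ := Metric.exists_isSeparated_isCover K (univ : Set M)
  refine ⟨A, hsep.mono' fun x y h => ?_, fun x => ?_⟩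
  · rw [edist_nndist, ENNReal.coe_lt_coe] at h
    exact_mod_cast h
  · obtain ⟨a, ha, hxa⟩ := hcover (mem_univ x)
    exact ⟨a, ha, by exact_mod_cast edist_le_coe.1 hxa⟩

theorem IsNet.mono (hA : IsNet K A) (hK : K ≤ K') : IsNet K' A := fun x =>
  let ⟨a, ha, hxa⟩ := hA x
  ⟨a, ha, hxa.trans hK⟩

theorem IsNet.image_of_coarse_rightInverse (hA : IsNet K A) (hl : 0 ≤ l)
    (hφ : ∀ x y : M, dist (φ x) (φ y) ≤ l * dist x y + c)
    (hφψ : ∀ x' : M', dist (φ (ψ x')) x' ≤ R) :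
    IsNet (R + (l * K + c)) (φ '' A) := by
  intro x'
  obtain ⟨a, ha, hψa⟩ := hA (ψ x')
  refine ⟨φ a, mem_image_of_mem φ ha, ?_⟩
  calc dist x' (φ a) ≤ dist x' (φ (ψ x')) + dist (φ (ψ x')) (φ a) := dist_triangle _ _ _
    _ ≤ R + (l * dist (ψ x') a + c) := by
        gcongr
        · rw [dist_comm]; exact hφψ x'
        · exact hφ _ _
    _ ≤ R + (l * K + c) := by gcongr

theorem dist_le_of_coarse_leftInverse
    (hψ : ∀ x' y' : M', dist (ψ x') (ψ y') ≤ l * dist x' y' + c)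
    (hψφ : ∀ x : M, dist (ψ (φ x)) x ≤ R) (x y : M) :
    dist x y ≤ l * dist (φ x) (φ y) + (2 * R + c) :=
  calc dist x y ≤ dist x (ψ (φ x)) + dist (ψ (φ x)) (ψ (φ y)) + dist (ψ (φ y)) y :=
        dist_triangle4 _ _ _ _
    _ ≤ R + (l * dist (φ x) (φ y) + c) + R := by
        gcongr
        · rw [dist_comm]; exact hψφ x
        · exact hψ _ _
        · exact hψφ y
    _ = l * dist (φ x) (φ y) + (2 * R + c) := by ring

theorem dist_le_mul_dist_map_of_pairwise (hε : 0 < ε) (hD : 0 ≤ D)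
    (hA : A.Pairwise fun x y => ε + D ≤ dist x y)
    (hlow : ∀ x y : M, dist x y ≤ l * dist (φ x) (φ y) + D) :
    ∀ x ∈ A, ∀ y ∈ A, dist x y ≤ l * (1 + D / ε) * dist (φ x) (φ y) := by
  intro x hx y hy
  rcases eq_or_ne x y with rfl | hne
  · simp
  have hsep := hA hx hy hne
  calc dist x y ≤ l * dist (φ x) (φ y) + D := hlow x y
    _ ≤ l * dist (φ x) (φ y) * (1 + D / ε) :=
        add_le_mul_one_add_div hε hD (by linarith [hlow x y])
    _ = l * (1 + D / ε) * dist (φ x) (φ y) := by ring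

theorem dist_map_le_mul_dist_of_pairwise (hε : 0 < ε) (hD : 0 ≤ D) (hl : 0 ≤ l)
    (hcD : c ≤ l * D) (hA : A.Pairwise fun x y => ε + D ≤ dist x y)
    (hup : ∀ x y : M, dist (φ x) (φ y) ≤ l * dist x y + c) :
    ∀ x ∈ A, ∀ y ∈ A, dist (φ x) (φ y) ≤ l * (1 + D / ε) * dist x y := by
  intro x hx y hy
  rcases eq_or_ne x y with rfl | hne
  · simp
  have hsep := hA hx hy hne
  calc dist (φ x) (φ y) ≤ l * dist x y + c := hup x y
    _ ≤ l * (dist x y + D) := by linarith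
    _ ≤ l * (dist x y * (1 + D / ε)) := by
        gcongr
        exact add_le_mul_one_add_div hε hD (by linarith)
    _ = l * (1 + D / ε) * dist x y := by ring

end MetricSpace

/-- A large scale Lipschitz equivalence with distortion `(λ, c, R)` restricts to a coarse
quasi-isometry with distortion `(R + 2λR + λc + λε + c, λ(1 + (2R + c)/ε))`. -/
theorem large_scale_Lipschitz_equivalence_restricts {M M' : Type*}
    [MetricSpace M] [MetricSpace M'] {l c R : ℝ} (hl : 1 ≤ l) (hc : 0 < c) (hR : 0 < R)
    (φ : M → M') (ψ : M' → M)
    (hφ : ∀ x y : M, dist (φ x) (φ y) ≤ l * dist x y + c)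
    (hψ : ∀ x' y' : M', dist (ψ x') (ψ y') ≤ l * dist x' y' + c)
    (hψφ : ∀ x : M, dist (ψ (φ x)) x ≤ R)
    (hφψ : ∀ x' : M', dist (φ (ψ x')) x' ≤ R) :
    ∀ ε : ℝ, 0 < ε →
      ∃ A : Set M, IsNet (R + 2 * l * R + l * c + l * ε + c) A ∧
        IsNet (R + 2 * l * R + l * c + l * ε + c) (φ '' A) ∧
        Set.InjOn φ A ∧
        ∀ x ∈ A, ∀ y ∈ A,
          (1 / (l * (1 + (2 * R + c) / ε))) * dist x y ≤ dist (φ x) (φ y) ∧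
          dist (φ x) (φ y) ≤ l * (1 + (2 * R + c) / ε) * dist x y := by
  intro ε hε
  have hD : 0 ≤ 2 * R + c := by positivity
  obtain ⟨A, hsep, hnet⟩ :=
    exists_pairwise_lt_dist_isNet (M := M) (by positivity : 0 ≤ ε + (2 * R + c))
  replace hsep : A.Pairwise fun x y => ε + (2 * R + c) ≤ dist x y :=
    hsep.mono' fun _ _ h => h.le
  have hlower := dist_le_mul_dist_map_of_pairwise hε hD hsep
    (dist_le_of_coarse_leftInverse hψ hψφ)
  have hupper := dist_map_le_mul_dist_of_pairwise hε hD (by linarith) (by nlinarith) hsep hφ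
  have hK : 0 < l * (1 + (2 * R + c) / ε) := by positivity
  refine ⟨A, hnet.mono (by nlinarith),
    (hnet.image_of_coarse_rightInverse (by linarith) hφ hφψ).mono (by linarith),
    fun x hx y hy hxy => ?_, fun x hx y hy => ⟨?_, hupper x hx y hy⟩⟩
  · simpa [hxy] using hlower x hx y hy
  · rw [one_div_mul_eq_div, div_le_iff₀' hK]
    exact hlower x hx y hy
end

section
/- There is no large scale Lipschitz equivalence between the metric spaces N² = {n² : n ∈ ℕ} and N³ = {n³ : n ∈ ℕ}, each equipped with the metric induced from the reals. -/
/-- The set of squares of natural numbers, as a subspace of `ℝ`. -/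
def Nsq : Set ℝ := {x : ℝ | ∃ n : ℕ, x = (n : ℝ) ^ 2}

/-- The set of cubes of natural numbers, as a subspace of `ℝ`. -/
def Ncb : Set ℝ := {x : ℝ | ∃ n : ℕ, x = (n : ℝ) ^ 3}

set_option maxHeartbeats 1000000 in
/-- There is no large scale Lipschitz equivalence between `N² = {n² : n ∈ ℕ}` and
`N³ = {n³ : n ∈ ℕ}` with the metric induced from `ℝ`. -/
theorem no_large_scale_Lipschitz_equivalence_Nsq_Ncb :
    ¬ ∃ (f : Nsq → Ncb) (g : Ncb → Nsq) (l c R : ℝ), 1 ≤ l ∧ 0 < c ∧ 0 < R ∧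
      (∀ x y : Nsq, dist (f x) (f y) ≤ l * dist x y + c) ∧
      (∀ x' y' : Ncb, dist (g x') (g y') ≤ l * dist x' y' + c) ∧
      (∀ x : Nsq, dist (g (f x)) x ≤ R) ∧
      (∀ x' : Ncb, dist (f (g x')) x' ≤ R) := by
  rintro ⟨f, g, l, c, R, hl, hc, hR, hf, hg, hgf, hfg⟩
  obtain ⟨n, hn⟩ := exists_nat_gt (max R (6*l + 2*c))
  have hnR : R < (n:ℝ) := lt_of_le_of_lt (le_max_left _ _) hn
  have hnl : 6*l + 2*c < (n:ℝ) := lt_of_le_of_lt (le_max_right _ _) hn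
  have hn1 : 1 ≤ (n:ℝ) := by nlinarith
  set s : ℕ → Nsq := fun i => ⟨((n + i : ℕ) : ℝ) ^ 2, ⟨n + i, rfl⟩⟩ with hs
  set m : ℕ → ℕ := fun i => (f (s i)).2.choose with hm
  have hmspec : ∀ i, ((f (s i)) : ℝ) = ((m i : ℕ) : ℝ) ^ 3 := fun i => (f (s i)).2.choose_spec
  have hds : ∀ i j : ℕ, dist (s i) (s j) = |((n + i : ℕ) : ℝ) ^ 2 - ((n + j : ℕ) : ℝ) ^ 2| := by
    intro i j
    rw [Subtype.dist_eq, Real.dist_eq]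
  -- injectivity of m
  have hinj : Function.Injective m := by
    intro i j hij
    by_contra hne
    have hfij : f (s i) = f (s j) := by
      apply Subtype.ext
      rw [hmspec i, hmspec j, hij]
    have h1 : dist (s i) (s j) ≤ 2 * R := by
      calc dist (s i) (s j) ≤ dist (s i) (g (f (s i))) + dist (g (f (s i))) (s j) :=
            dist_triangle _ _ _
        _ = dist (g (f (s i))) (s i) + dist (g (f (s j))) (s j) := by rw [hfij, dist_comm]
        _ ≤ R + R := add_le_add (hgf _) (hgf _)
        _ = 2 * R := by ring
    have h2 : 2 * (n:ℝ) ≤ dist (s i) (s j) := by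
      rw [hds]
      rcases lt_or_gt_of_ne hne with h | h
      · have : (i:ℝ) + 1 ≤ j := by exact_mod_cast h
        rw [abs_sub_comm, abs_of_nonneg (by push_cast; nlinarith [Nat.cast_nonneg (α := ℝ) i])]
        push_cast
        nlinarith [Nat.cast_nonneg (α := ℝ) i]
      · have : (j:ℝ) + 1 ≤ i := by exact_mod_cast h
        rw [abs_of_nonneg (by push_cast; nlinarith [Nat.cast_nonneg (α := ℝ) j])]
        push_cast
        nlinarith [Nat.cast_nonneg (α := ℝ) j]
    linarith
  -- the bound on images
  have hb : ∀ i ≤ n, |((m i : ℕ) : ℝ) ^ 3 - ((m 0 : ℕ) : ℝ) ^ 3| ≤ 3*l*(n:ℝ)^2 + c := by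
    intro i hi
    have h1 : dist (f (s i)) (f (s 0)) ≤ l * dist (s i) (s 0) + c := hf _ _
    have h2 : dist (s i) (s 0) ≤ 3 * (n:ℝ)^2 := by
      rw [hds]
      have hi' : (i:ℝ) ≤ n := by exact_mod_cast hi
      rw [abs_of_nonneg (by push_cast; nlinarith [Nat.cast_nonneg (α := ℝ) i])]
      push_cast
      nlinarith [Nat.cast_nonneg (α := ℝ) i]
    have h3 : dist (f (s i)) (f (s 0)) = |((m i : ℕ) : ℝ) ^ 3 - ((m 0 : ℕ) : ℝ) ^ 3| := by
      rw [Subtype.dist_eq, Real.dist_eq, hmspec i, hmspec 0]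
    rw [h3] at h1
    have hl0 : 0 < l := by linarith
    nlinarith [dist_nonneg (x := s i) (y := s 0)]
  -- the set of images
  set S : Finset ℕ := (Finset.range (n+1)).image m with hS
  have hcard : S.card = n + 1 := by
    rw [hS, Finset.card_image_of_injective _ hinj, Finset.card_range]
  have hSne : S.Nonempty := by
    rw [← Finset.card_pos, hcard]; omega
  set M := S.max' hSne with hM
  set μ := S.min' hSne with hμ
  have hsub : S ⊆ Finset.Icc μ M := fun x hx =>
    Finset.mem_Icc.mpr ⟨S.min'_le x hx, S.le_max' x hx⟩
  have hcard2 : S.card ≤ (Finset.Icc μ M).card := Finset.card_le_card hsub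
  rw [Nat.card_Icc, hcard] at hcard2
  have hμM : μ + n ≤ M := by omega
  obtain ⟨i, hi, hiM⟩ := Finset.mem_image.mp (S.max'_mem hSne)
  obtain ⟨j, hj, hjμ⟩ := Finset.mem_image.mp (S.min'_mem hSne)
  have hbi := hb i (by simpa using Nat.lt_succ_iff.mp (Finset.mem_range.mp hi))
  have hbj := hb j (by simpa using Nat.lt_succ_iff.mp (Finset.mem_range.mp hj))
  rw [hiM] at hbi
  rw [hjμ] at hbj
  -- n^3 ≤ M^3 - μ^3 ≤ 6ln^2 + 2c
  have hMr : (μ:ℝ) + n ≤ M := by exact_mod_cast hμM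
  have hcube : ((μ:ℝ) + (n:ℝ))^3 ≤ (M:ℝ)^3 :=
    pow_le_pow_left₀ (by positivity) hMr 3
  have hlow : (n:ℝ)^3 ≤ (M:ℝ)^3 - (μ:ℝ)^3 := by
    nlinarith [Nat.cast_nonneg (α := ℝ) μ, Nat.cast_nonneg (α := ℝ) n,
      mul_nonneg (mul_nonneg (Nat.cast_nonneg (α := ℝ) μ) (Nat.cast_nonneg (α := ℝ) μ))
        (Nat.cast_nonneg (α := ℝ) n),
      mul_nonneg (mul_nonneg (Nat.cast_nonneg (α := ℝ) μ) (Nat.cast_nonneg (α := ℝ) n))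
        (Nat.cast_nonneg (α := ℝ) n)]
  have hup : (M:ℝ)^3 - (μ:ℝ)^3 ≤ 6*l*(n:ℝ)^2 + 2*c := by
    have h1 := abs_le.mp hbi
    have h2 := abs_le.mp hbj
    linarith [h1.2, h2.1]
  have hn2 : 1 ≤ (n:ℝ)^2 := by nlinarith
  have hc2 : 6*l*(n:ℝ)^2 + 2*c ≤ (6*l+2*c)*(n:ℝ)^2 := by nlinarith
  have hfin : (6*l+2*c)*(n:ℝ)^2 < (n:ℝ)*(n:ℝ)^2 :=
    mul_lt_mul_of_pos_right hnl (by positivity)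
  have hid : (n:ℝ)*(n:ℝ)^2 = (n:ℝ)^3 := by ring
  linarith
end

section
/- If a metric space (M,d) admits a coarse quasi-isometry with coarse distortion (K,C) to a geodesic metric space (M',d'), then M is coarsely quasi-convex, with constants depending only on K and C; in particular one may take c = 2K + 2CK + C and a = (8CK+C)C. -/
open Finset

/-- A metric space is geodesic if any two points are joined by an isometrically parametrized
path whose length equals their distance. -/
def IsGeodesicSpace (M : Type*) [MetricSpace M] : Prop :=
  ∀ p q : M, ∃ γ : ℝ → M, γ 0 = p ∧ γ (dist p q) = q ∧
    ∀ s ∈ Set.Icc (0 : ℝ) (dist p q), ∀ t ∈ Set.Icc (0 : ℝ) (dist p q),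
      dist (γ s) (γ t) = |s - t|

/-- If `M` admits a coarse quasi-isometry with distortion `(K, C)` to a geodesic metric space
`M'`, then `M` is coarsely quasi-convex with constants depending only on `K` and `C`: one may
take `c = 2K + 2CK + C` and `a = (8CK + C)C`. -/
theorem coarsely_quasi_convex_of_quasi_isometric_to_geodesic
    {M M' : Type*} [MetricSpace M] [MetricSpace M'] {K C : ℝ} (hK : 0 < K) (hC : 1 ≤ C)
    (hgeo : IsGeodesicSpace M')
    {A : Set M} {A' : Set M'} (hA : IsNet K A) (hA' : IsNet K A')
    (f : M → M') (hbij : Set.BijOn f A A')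
    (hbiLip : ∀ x ∈ A, ∀ y ∈ A,
      (1 / C) * dist x y ≤ dist (f x) (f y) ∧ dist (f x) (f y) ≤ C * dist x y) :
    ∃ b : ℝ, 0 < b ∧
      ∀ x y : M, ∃ (n : ℕ) (u : ℕ → M), u 0 = x ∧ u n = y ∧
        (∀ k < n, dist (u k) (u (k + 1)) ≤ 2 * K + 2 * C * K + C) ∧
        ∑ k ∈ range n, dist (u k) (u (k + 1)) ≤ (8 * C * K + C) * C * dist x y + b := by
  have hC0 : (0:ℝ) < C := lt_of_lt_of_le one_pos hC
  -- a "projection" to the net A via pulling back a net point of A'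
  have hgex : ∀ z : M', ∃ v, v ∈ A ∧ dist z (f v) ≤ K := by
    intro z
    obtain ⟨a', ha', hd⟩ := hA' z
    obtain ⟨v, hv, hfv⟩ := hbij.surjOn ha'
    exact ⟨v, hv, by rwa [hfv]⟩
  choose g hgA hgd using hgex
  have hCle : ∀ u ∈ A, ∀ v ∈ A, dist u v ≤ C * dist (f u) (f v) := by
    intro u hu v hv
    have h := (hbiLip u hu v hv).1
    have h2 := mul_le_mul_of_nonneg_left h hC0.le
    calc dist u v = C * (1 / C * dist u v) := by field_simp
      _ ≤ C * dist (f u) (f v) := h2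
  have hB0 : (0:ℝ) < 2*K+2*C*K+C := by nlinarith
  refine ⟨(2*C*K+3)*(2*K+2*C*K+C), mul_pos (by nlinarith) hB0, ?_⟩
  intro x y
  obtain ⟨p, hp, hxp⟩ := hA x
  obtain ⟨q, hq, hyq⟩ := hA y
  set D := dist (f p) (f q) with hDdef
  have hD0 : 0 ≤ D := dist_nonneg
  obtain ⟨γ, hγ0, hγD, hγ⟩ := hgeo (f p) (f q)
  set n := ⌈D⌉₊ with hndef
  have hnD : D ≤ (n:ℝ) := Nat.le_ceil D
  have hnD1 : (n:ℝ) ≤ D + 1 := le_of_lt (Nat.ceil_lt_add_one hD0)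
  set u : ℕ → M := fun k => if k = 0 then x else
    if k ≤ n + 1 then g (γ (min ((k:ℝ) - 1) D)) else y with hudef
  have hu0 : u 0 = x := by simp [hudef]
  have huend : u (n + 2) = y := by simp [hudef]
  have humid : ∀ k, 1 ≤ k → k ≤ n + 1 → u k = g (γ (min ((k:ℝ) - 1) D)) := by
    intro k h1 h2
    have hk0 : k ≠ 0 := by omega
    simp [hudef, hk0, h2]
  -- membership of parameters in Icc 0 D
  have hmem : ∀ k : ℕ, 1 ≤ k → min ((k:ℝ) - 1) D ∈ Set.Icc (0:ℝ) D := by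
    intro k hk
    constructor
    · apply le_min _ hD0
      have : (1:ℝ) ≤ (k:ℝ) := by exact_mod_cast hk
      linarith
    · exact min_le_right _ _
  have hstep : ∀ k < n + 2, dist (u k) (u (k + 1)) ≤ 2 * K + 2 * C * K + C := by
    intro k hk
    rcases Nat.eq_zero_or_pos k with hk0 | hk1
    · -- first step: x to g (γ 0)
      subst hk0
      have h1 : u 1 = g (γ 0) := by
        rw [humid 1 le_rfl (by omega)]
        norm_num [min_eq_left hD0]
      rw [hu0, h1, hγ0]
      have hd1 : dist p (g (f p)) ≤ C * dist (f p) (f (g (f p))) := hCle p hp _ (hgA _)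
      have hd2 : dist (f p) (f (g (f p))) ≤ K := hgd (f p)
      have := dist_triangle x p (g (f p))
      nlinarith
    · rcases eq_or_lt_of_le (Nat.lt_succ_iff.mp hk) with hkend | hkmid
      · -- last step: g (γ D) to y
        rw [hkend]
        have h1 : u (n + 1) = g (γ (min ((n:ℝ) + 1 - 1) D)) := by
          have := humid (n + 1) (by omega) le_rfl
          rw [this]; push_cast; ring_nf
        have hmin : min ((n:ℝ) + 1 - 1) D = D := by
          rw [min_eq_right]; linarith
        have h2 : u (n + 1 + 1) = y := huend
        rw [h1, h2, hmin, hγD]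
        have hd1 : dist (g (f q)) q ≤ C * dist (f (g (f q))) (f q) := hCle _ (hgA _) q hq
        have hd2 : dist (f q) (f (g (f q))) ≤ K := hgd (f q)
        rw [dist_comm (f (g (f q))) (f q)] at hd1
        have := dist_triangle (g (f q)) q y
        rw [dist_comm q y] at this
        nlinarith
      · -- middle step
        have hk2 : k + 1 ≤ n + 1 := by omega
        have h1 : u k = g (γ (min ((k:ℝ) - 1) D)) := humid k hk1 (by omega)
        have h2 : u (k + 1) = g (γ (min ((k:ℝ) + 1 - 1) D)) := by
          have := humid (k + 1) (by omega) hk2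
          rw [this]; push_cast; ring_nf
        have h2' : u (k + 1) = g (γ (min ((k:ℝ)) D)) := by
          rw [h2]; norm_num
        set s := min ((k:ℝ) - 1) D with hs
        set t := min ((k:ℝ)) D with ht
        have hst : s ≤ t := min_le_min (by linarith) le_rfl
        have hts : t ≤ s + 1 := by
          rcases min_cases ((k:ℝ) - 1) D with ⟨e, he⟩ | ⟨e, he⟩ <;>
            rcases min_cases ((k:ℝ)) D with ⟨e', he'⟩ | ⟨e', he'⟩ <;>
              rw [hs, ht, e, e'] <;> linarith
        have hsm : s ∈ Set.Icc (0:ℝ) D := hmem k hk1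
        have htm : t ∈ Set.Icc (0:ℝ) D := by
          have := hmem (k + 1) (by omega)
          rw [ht]
          convert this using 2
          push_cast; ring
        have hdst : dist (γ s) (γ t) ≤ 1 := by
          rw [hγ s hsm t htm]
          rw [abs_le]
          constructor <;> linarith
        have hd1 : dist (γ s) (f (g (γ s))) ≤ K := hgd (γ s)
        have hd2 : dist (γ t) (f (g (γ t))) ≤ K := hgd (γ t)
        have hd3 : dist (g (γ s)) (g (γ t)) ≤ C * dist (f (g (γ s))) (f (g (γ t))) :=
          hCle _ (hgA _) _ (hgA _)
        have htri : dist (f (g (γ s))) (f (g (γ t))) ≤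
            dist (f (g (γ s))) (γ s) + dist (γ s) (γ t) + dist (γ t) (f (g (γ t))) :=
          dist_triangle4 _ _ _ _
        rw [dist_comm (f (g (γ s))) (γ s)] at htri
        rw [h1, h2']
        nlinarith
  refine ⟨n + 2, u, hu0, huend, hstep, ?_⟩
  have hsum : ∑ k ∈ range (n + 2), dist (u k) (u (k + 1)) ≤
      ((n:ℝ) + 2) * (2 * K + 2 * C * K + C) := by
    calc ∑ k ∈ range (n + 2), dist (u k) (u (k + 1))
        ≤ ∑ _k ∈ range (n + 2), (2 * K + 2 * C * K + C) :=
          Finset.sum_le_sum (fun k hk => hstep k (mem_range.mp hk))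
      _ = ((n:ℝ) + 2) * (2 * K + 2 * C * K + C) := by
          rw [Finset.sum_const, card_range, nsmul_eq_mul]; push_cast; ring
  have hDle : D ≤ C * (dist x y + 2 * K) := by
    have h1 : dist p q ≤ dist p x + dist x y + dist y q := dist_triangle4 p x y q
    have h2 : D ≤ C * dist p q := (hbiLip p hp q hq).2
    rw [dist_comm p x] at h1
    nlinarith
  have hdxy : 0 ≤ dist x y := dist_nonneg
  have hn2 : (n:ℝ) + 2 ≤ C * dist x y + 2*C*K + 3 := by linarith
  have h3 : ((n:ℝ)+2)*(2*K+2*C*K+C) ≤ (C*dist x y + 2*C*K+3)*(2*K+2*C*K+C) :=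
    mul_le_mul_of_nonneg_right hn2 hB0.le
  have h4 : C*dist x y*(2*K+2*C*K+C) ≤ (8*C*K+C)*C*dist x y := by
    nlinarith [mul_nonneg (mul_nonneg hdxy hC0.le) (show (0:ℝ) ≤ 6*C*K - 2*K by nlinarith)]
  nlinarith [hsum, h3, h4]
end

section
/- Let (M,d) be a proper metric space and M^ν its Higson compactification. A point p ∈ M^ν lies in M if and only if the singleton {p} is a G_δ subset of M^ν. -/
/-!
Since `M` is locally compact, it is open in its compactification, so every point of `M` has a
countable neighbourhood basis in `M^ν`; in a compact Hausdorff space this is equivalent (by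
Urysohn's lemma) to the point being a `G_δ`.

Conversely, if `p ∉ M` had a countable neighbourhood basis, some sequence `x n` of `M` would
converge to `p` while escaping to infinity. Pass to a subsequence along which `√(d(o, x n))`
jumps by at least `1` and let `S` be its values at even indices. Since `√(d(o, ·))` varies by
`O(r / √d)` on `r`-balls, `z ↦ min(1, dist(√(d(o, z)), S))` is a Higson function; it vanishes at
the even terms and equals `1` at the odd ones, so its continuous extension cannot exist at `p`.
-/

/-- A bounded continuous function `f` on a metric space `M` is a Higson function if for every
`r > 0` its `r`-expansion `∇_r f (x) = sup {|f x − f y| : dist x y ≤ r}` vanishes at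
infinity. -/
def IsHigsonFunction {M : Type*} [MetricSpace M] (f : M → ℂ) : Prop :=
  ∀ r : ℝ, 0 < r → ∀ ε : ℝ, 0 < ε → ∃ K : Set M, IsCompact K ∧
    ∀ x ∉ K, ∀ y : M, dist x y ≤ r → dist (f x) (f y) < ε

/-- `(X, e)` is the Higson compactification of `M`: a compactification of `M` such that the
bounded continuous functions on `M` extending continuously to `X` are exactly the continuous
Higson functions. -/
structure IsHigsonCompactification (M : Type*) [MetricSpace M] (X : Type*)
    [TopologicalSpace X] [CompactSpace X] [T2Space X] (e : M → X) : Prop where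
  embedding : Topology.IsEmbedding e
  dense : DenseRange e
  higson : ∀ f : BoundedContinuousFunction M ℂ,
    (∃ g : C(X, ℂ), ∀ x : M, g (e x) = f x) ↔ IsHigsonFunction f

open Metric Set Filter Topology
open scoped BoundedContinuousFunction

theorem isGδ_singleton_of_isCountablyGenerated_nhds {X : Type*} [TopologicalSpace X] [T1Space X]
    (x : X) [(𝓝 x).IsCountablyGenerated] : IsGδ ({x} : Set X) := by
  rcases (nhds_basis_opens x).exists_antitone_subbasis with ⟨U, hU, h_basis⟩
  rw [← biInter_basis_nhds h_basis.toHasBasis]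
  exact .biInter (to_countable _) fun n _ => (hU n).2.isGδ

theorem isCountablyGenerated_nhds_of_isGδ_singleton {X : Type*} [TopologicalSpace X]
    [CompactSpace X] [T2Space X] {p : X} (hp : IsGδ ({p} : Set X)) :
    (𝓝 p).IsCountablyGenerated := by
  obtain ⟨f, hf, -⟩ := exists_continuous_one_zero_of_isCompact_of_isGδ isCompact_singleton hp
    isClosed_empty (disjoint_empty _)
  have hfp : f p = 1 := (hf ▸ mem_singleton p : p ∈ f ⁻¹' {1})
  -- `p` is the only cluster point of `comap f (𝓝 1)`, so compactness squeezes it into `𝓝 p`.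
  have hle : comap f (𝓝 1) ≤ 𝓝 p := le_nhds_of_unique_clusterPt fun q hq => by
    have hq1 : f q = 1 := eq_of_nhds_neBot (hq.map f.continuous.continuousAt tendsto_comap)
    rwa [← mem_singleton_iff, hf]
  rw [le_antisymm (hfp ▸ f.continuous.tendsto p).le_comap hle]
  infer_instance

theorem DenseRange.isOpen_range_of_isEmbedding {M X : Type*} [TopologicalSpace M]
    [WeaklyLocallyCompactSpace M] [TopologicalSpace X] [T2Space X] {e : M → X}
    (hd : DenseRange e) (he : IsEmbedding e) : IsOpen (range e) := by
  refine isOpen_iff_mem_nhds.2 ?_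
  rintro _ ⟨x, rfl⟩
  obtain ⟨K, hK, hKx⟩ := exists_compact_mem_nhds x
  rw [he.nhds_eq_comap] at hKx
  obtain ⟨V, hV, hVK⟩ := hKx
  obtain ⟨U, hUV, hU, hxU⟩ := mem_nhds_iff.1 hV
  have hUK : U ⊆ e '' K := calc
    U ⊆ closure (U ∩ range e) := hd.open_subset_closure_inter hU
    _ ⊆ closure (e '' K) := closure_mono <| by
      rintro _ ⟨hmU, m, rfl⟩
      exact mem_image_of_mem e (hVK (hUV hmU))
    _ = e '' K := (hK.image he.continuous).isClosed.closure_eq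
  exact mem_of_superset (hU.mem_nhds hxU) (hUK.trans (image_subset_range e K))

theorem comap_nhds_le_cocompact_of_notMem_range {M X : Type*} [TopologicalSpace M]
    [TopologicalSpace X] [T2Space X] {e : M → X} (he : Continuous e) {p : X}
    (hp : p ∉ range e) : comap e (𝓝 p) ≤ cocompact M := by
  refine hasBasis_cocompact.ge_iff.2 fun K hK => ?_
  refine mem_comap.2 ⟨(e '' K)ᶜ, (hK.image he).isClosed.isOpen_compl.mem_nhds ?_, ?_⟩
  · exact fun hpK => hp (image_subset_range e K hpK)
  · exact fun m hm hmK => hm (mem_image_of_mem e hmK)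

theorem Real.abs_sqrt_sub_sqrt_le {a b : ℝ} (ha : 0 < a) (hb : 0 ≤ b) :
    |√a - √b| ≤ |a - b| / √a := by
  have hsa : 0 < √a := Real.sqrt_pos.2 ha
  rw [le_div_iff₀ hsa]
  calc |√a - √b| * √a ≤ |√a - √b| * |√a + √b| := by
        gcongr
        exact (le_add_of_nonneg_right (Real.sqrt_nonneg b)).trans (le_abs_self _)
    _ = |a - b| := by
        rw [← abs_mul]
        congr 1
        nlinarith [Real.mul_self_sqrt ha.le, Real.mul_self_sqrt hb]

theorem exists_strictMono_forall_add_one_le {u : ℕ → ℝ} (hu : Tendsto u atTop atTop) :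
    ∃ φ : ℕ → ℕ, StrictMono φ ∧ ∀ m n, m < n → u (φ m) + 1 ≤ u (φ n) := by
  obtain ⟨φ, -, hφ⟩ := exists_seq_of_forall_finset_exists (fun _ => True)
    (fun a b => a < b ∧ u a + 1 ≤ u b) fun s _ => by
      have : ∀ᶠ b in atTop, ∀ a ∈ s, a < b ∧ u a + 1 ≤ u b :=
        (eventually_all_finset s).2 fun a _ =>
          (eventually_gt_atTop a).and (hu.eventually_ge_atTop _)
      exact this.exists.imp fun b hb => ⟨trivial, hb⟩
  exact ⟨φ, fun m n hmn => (hφ m n hmn).1, fun m n hmn => (hφ m n hmn).2⟩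

theorem isHigsonFunction_comp_sqrt_dist {M : Type*} [MetricSpace M] [ProperSpace M] (o : M)
    {h : ℝ → ℂ} (hh : UniformContinuous h) : IsHigsonFunction fun z => h √(dist o z) := by
  intro r hr ε hε
  obtain ⟨δ, hδ, hδε⟩ := Metric.uniformContinuous_iff.1 hh ε hε
  refine ⟨closedBall o ((r / δ) ^ 2), isCompact_closedBall _ _, fun x hx y hxy => hδε ?_⟩
  have hxo : (r / δ) ^ 2 < dist o x := by simpa [dist_comm] using hx
  have hpos : 0 < dist o x := (sq_nonneg _).trans_lt hxo
  have hsqrt : r / δ < √(dist o x) := (Real.lt_sqrt (by positivity)).2 hxo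
  rw [Real.dist_eq]
  calc |√(dist o x) - √(dist o y)| ≤ |dist o x - dist o y| / √(dist o x) :=
        Real.abs_sqrt_sub_sqrt_le hpos dist_nonneg
    _ ≤ r / √(dist o x) := by
        gcongr
        simpa only [Real.dist_eq] using (dist_dist_dist_le_right o x y).trans hxy
    _ < δ := by
        rw [div_lt_iff₀ (Real.sqrt_pos.2 hpos)]
        rwa [div_lt_iff₀ hδ, mul_comm] at hsqrt

noncomputable def cappedInfDist {Y : Type*} [PseudoMetricSpace Y] (S : Set Y) : Y →ᵇ ℂ :=
  BoundedContinuousFunction.ofNormedAddCommGroup (fun y => ((min (infDist y S) 1 : ℝ) : ℂ))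
    (by fun_prop) 1 fun y => by
      rw [Complex.norm_real, Real.norm_of_nonneg (le_min infDist_nonneg zero_le_one)]
      exact min_le_right _ _

section CappedInfDist

variable {Y : Type*} [PseudoMetricSpace Y] {S : Set Y} {y : Y}

theorem uniformContinuous_cappedInfDist (S : Set Y) : UniformContinuous (cappedInfDist S) :=
  (Complex.isometry_ofReal.lipschitz.comp ((lipschitz_infDist_pt S).min_const 1)).uniformContinuous

theorem cappedInfDist_of_mem (hy : y ∈ S) : cappedInfDist S y = 0 := by
  simp [cappedInfDist, infDist_zero_of_mem hy]

theorem cappedInfDist_of_forall_one_le_dist (hS : S.Nonempty) (hy : ∀ s ∈ S, 1 ≤ dist y s) :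
    cappedInfDist S y = 1 := by
  simp [cappedInfDist, (le_infDist hS).2 hy]

end CappedInfDist

theorem IsHigsonCompactification.not_tendsto_of_tendsto_cocompact {M : Type*} [MetricSpace M]
    [ProperSpace M] {X : Type*} [TopologicalSpace X] [CompactSpace X] [T2Space X] {e : M → X}
    (h : IsHigsonCompactification M X e) {x : ℕ → M} (hx : Tendsto x atTop (cocompact M))
    (p : X) : ¬ Tendsto (e ∘ x) atTop (𝓝 p) := by
  intro hp
  set o := x 0
  set u : ℕ → ℝ := fun n => √(dist o (x n))
  have hu : Tendsto u atTop atTop :=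
    Real.tendsto_sqrt_atTop.comp ((tendsto_dist_left_cocompact_atTop o).comp hx)
  obtain ⟨φ, hφ, hgap⟩ := exists_strictMono_forall_add_one_le hu
  set S := range fun k => u (φ (2 * k))
  have hsep : ∀ k, ∀ s ∈ S, 1 ≤ dist (u (φ (2 * k + 1))) s := by
    rintro k _ ⟨j, rfl⟩
    rw [Real.dist_eq, le_abs]
    rcases lt_or_gt_of_ne (show 2 * j ≠ 2 * k + 1 by omega) with hjk | hjk
    · exact .inl (by linarith [hgap _ _ hjk])
    · exact .inr (by linarith [hgap _ _ hjk])
  let F : M →ᵇ ℂ := (cappedInfDist S).compContinuous ⟨fun z => √(dist o z), by fun_prop⟩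
  obtain ⟨g, hg⟩ :=
    (h.higson F).2 (isHigsonFunction_comp_sqrt_dist o (uniformContinuous_cappedInfDist S))
  have hgF : Tendsto (fun n => F (x (φ n))) atTop (𝓝 (g p)) := by
    simpa only [Function.comp_def, hg] using
      (g.continuous.tendsto p).comp (hp.comp hφ.tendsto_atTop)
  have heven : g p = 0 := tendsto_nhds_unique
    (hgF.comp (strictMono_mul_left_of_pos two_pos).tendsto_atTop)
    (tendsto_const_nhds.congr fun k => (cappedInfDist_of_mem (mem_range_self k)).symm)
  have hodd : g p = 1 := tendsto_nhds_unique
    (hgF.comp ((strictMono_mul_left_of_pos two_pos).add_const 1).tendsto_atTop)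
    (tendsto_const_nhds.congr fun k =>
      (cappedInfDist_of_forall_one_le_dist (range_nonempty _) (hsep k)).symm)
  exact zero_ne_one (heven.symm.trans hodd)

/-- A point `p` of the Higson compactification `M^ν` of a proper metric space `M` lies in `M`
if and only if `{p}` is a `G_δ` subset of `M^ν`. -/
theorem mem_of_isGδ_singleton {M : Type*} [MetricSpace M] [ProperSpace M]
    {X : Type*} [TopologicalSpace X] [CompactSpace X] [T2Space X] {e : M → X}
    (h : IsHigsonCompactification M X e) (p : X) :
    p ∈ Set.range e ↔ IsGδ ({p} : Set X) := by
  refine ⟨?_, fun hp => by_contra fun hpe => ?_⟩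
  · rintro ⟨x, rfl⟩
    have he : IsOpenEmbedding e :=
      ⟨h.embedding, h.dense.isOpen_range_of_isEmbedding h.embedding⟩
    have : (𝓝 (e x)).IsCountablyGenerated := he.map_nhds_eq x ▸ inferInstance
    exact isGδ_singleton_of_isCountablyGenerated_nhds (e x)
  · have := isCountablyGenerated_nhds_of_isGδ_singleton hp
    have : (comap e (𝓝 p)).NeBot :=
      (⟨h.embedding.isInducing, h.dense⟩ : IsDenseInducing e).comap_nhds_neBot p
    obtain ⟨x, hx⟩ := exists_seq_tendsto (comap e (𝓝 p))
    exact h.not_tendsto_of_tendsto_cocompact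
      (hx.trans (comap_nhds_le_cocompact_of_notMem_range h.embedding.continuous hpe)) p
      (tendsto_comap_iff.1 hx)
end

section
/- Let (M,d) be a non-compact proper metric space and W ⊆ M a subset containing metric balls of arbitrarily large radius. Then the closure of W in the Higson compactification M^ν is a neighborhood of some point of the Higson corona νM = M^ν \ M. -/
/-!
Choose balls `B(c k, k + 1) ⊆ W` whose centres `c k` escape to infinity (if no far ball lay in
`W`, the large balls in `W` would have bounded centres and exhaust `M`), and put
`f = ⨆ k, max 0 (1 - d(·, c k) / (k + 1))`. Far out only tents of large radius are non-zero, and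
they oscillate little over a bounded distance, so `f` is a Higson function; it is `1` at every
`c k` and `0` off `W`. Its extension `g` to `M^ν` is `1` at a cluster point `p` of `(c k)`, which
lies in the corona as `c k → ∞`, and by density of `M` the open set `{g ≠ 0} ∋ p` lies in the
closure of `W`.
-/

open Metric Filter Topology Set

theorem abs_ciSup_sub_ciSup_le {ι : Type*} [Nonempty ι] {u v : ι → ℝ} {L : ℝ}
    (hu : BddAbove (range u)) (hv : BddAbove (range v)) (h : ∀ i, |u i - v i| ≤ L) :
    |(⨆ i, u i) - ⨆ i, v i| ≤ L := by
  refine abs_sub_le_iff.2 ⟨sub_le_iff_le_add.2 (ciSup_le fun i => ?_),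
    sub_le_iff_le_add.2 (ciSup_le fun i => ?_)⟩
  · linarith [le_ciSup hv i, (abs_sub_le_iff.1 (h i)).1]
  · linarith [le_ciSup hu i, (abs_sub_le_iff.1 (h i)).2]

section Tent

variable {M : Type*} [PseudoMetricSpace M]

noncomputable def tent (a : M) (ρ : ℝ) (x : M) : ℝ := max 0 (1 - dist x a / ρ)

theorem tent_nonneg (a : M) (ρ : ℝ) (x : M) : 0 ≤ tent a ρ x := le_max_left _ _

theorem tent_le_one (a : M) {ρ : ℝ} (hρ : 0 ≤ ρ) (x : M) : tent a ρ x ≤ 1 :=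
  max_le zero_le_one (sub_le_self _ (div_nonneg dist_nonneg hρ))

theorem tent_self (a : M) (ρ : ℝ) : tent a ρ a = 1 := by simp [tent]

theorem tent_eq_zero {a x : M} {ρ : ℝ} (hρ : 0 < ρ) (hx : ρ ≤ dist x a) : tent a ρ x = 0 :=
  max_eq_left (by rw [sub_nonpos, le_div_iff₀ hρ, one_mul]; exact hx)

theorem abs_tent_sub_tent_le (a : M) {ρ : ℝ} (hρ : 0 ≤ ρ) (x y : M) :
    |tent a ρ x - tent a ρ y| ≤ dist x y / ρ := by
  calc |tent a ρ x - tent a ρ y|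
      ≤ |(1 - dist x a / ρ) - (1 - dist y a / ρ)| := by
        rw [tent, tent, max_comm 0, max_comm 0]; exact abs_max_sub_max_le_abs _ _ 0
    _ = |(dist y a - dist x a) / ρ| := by ring_nf
    _ = |dist y a - dist x a| / ρ := by rw [abs_div, abs_of_nonneg hρ]
    _ ≤ dist x y / ρ := by
        gcongr; rw [dist_comm x y]; exact abs_dist_sub_le _ _ _

noncomputable def tentSup (c : ℕ → M) (x : M) : ℝ := ⨆ k : ℕ, tent (c k) (k + 1) x

variable (c : ℕ → M)

theorem bddAbove_range_tent (x : M) : BddAbove (range fun k : ℕ => tent (c k) (k + 1) x) :=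
  ⟨1, by rintro _ ⟨k, rfl⟩; exact tent_le_one _ (by positivity) x⟩

theorem tentSup_nonneg (x : M) : 0 ≤ tentSup c x :=
  (tent_nonneg _ _ x).trans (le_ciSup (bddAbove_range_tent c x) 0)

theorem tentSup_le_one (x : M) : tentSup c x ≤ 1 :=
  ciSup_le fun _ => tent_le_one _ (by positivity) x

theorem tentSup_apply_self (k : ℕ) : tentSup c (c k) = 1 :=
  le_antisymm (tentSup_le_one c _) <|
    (tent_self (c k) (k + 1)).symm.le.trans (le_ciSup (bddAbove_range_tent c _) k)

theorem tentSup_eq_zero {x : M} (hx : ∀ k : ℕ, x ∉ ball (c k) (k + 1)) : tentSup c x = 0 := by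
  simp only [mem_ball, not_lt] at hx
  simp [tentSup, tent_eq_zero (Nat.cast_add_one_pos _) (hx _)]

theorem abs_tentSup_sub_tentSup_le {x y : M} {L : ℝ}
    (h : ∀ k : ℕ, |tent (c k) (k + 1) x - tent (c k) (k + 1) y| ≤ L) :
    |tentSup c x - tentSup c y| ≤ L :=
  abs_ciSup_sub_ciSup_le (bddAbove_range_tent c x) (bddAbove_range_tent c y) h

theorem lipschitzWith_tentSup : LipschitzWith 1 (tentSup c) := by
  refine LipschitzWith.of_dist_le_mul fun x y => ?_
  rw [Real.dist_eq, NNReal.coe_one, one_mul]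
  refine abs_tentSup_sub_tentSup_le c fun k => ?_
  exact (abs_tent_sub_tent_le _ (by positivity) x y).trans (div_le_self dist_nonneg (by simp))

end Tent

section FarBalls

variable {M : Type*} [MetricSpace M] [ProperSpace M] [NoncompactSpace M] {W : Set M}

theorem exists_lt_dist_ball_subset (hW : ∀ r : ℝ, 0 < r → ∃ x : M, ball x r ⊆ W) (o : M)
    (R r : ℝ) : ∃ x : M, R < dist x o ∧ ball x r ⊆ W := by
  by_contra! hfar
  have hW_univ : W = univ := by
    refine eq_univ_of_forall fun y => ?_
    obtain ⟨x, hx⟩ := hW (|r| + |R| + dist y o + 1) (by positivity)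
    have hxo : dist x o ≤ R := by
      by_contra! hxo
      refine hfar x hxo ((ball_subset_ball ?_).trans hx)
      linarith [le_abs_self r, abs_nonneg R, dist_nonneg (x := y) (y := o)]
    refine hx (mem_ball.2 ?_)
    linarith [dist_triangle_right y x o, le_abs_self R, abs_nonneg r]
  have hunbdd : ¬Bornology.IsBounded (univ : Set M) := by
    rw [← compactSpace_iff_isBounded_univ, not_compactSpace_iff]; infer_instance
  obtain ⟨x, -, hx⟩ :=
    not_subset.1 fun h => hunbdd ((isBounded_iff_subset_closedBall o).2 ⟨R, h⟩)
  exact hfar x (by simpa using hx) (hW_univ ▸ subset_univ _)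

theorem exists_tendsto_cocompact_ball_subset (hW : ∀ r : ℝ, 0 < r → ∃ x : M, ball x r ⊆ W) :
    ∃ c : ℕ → M, Tendsto c atTop (cocompact M) ∧ ∀ k : ℕ, ball (c k) (k + 1) ⊆ W := by
  obtain ⟨o⟩ := nonempty_of_neBot (cocompact M)
  choose c hc_far hc_ball using fun k : ℕ => exists_lt_dist_ball_subset hW o k (k + 1)
  exact ⟨c, tendsto_cocompact_of_tendsto_dist_comp_atTop o
    (tendsto_atTop_mono (fun k => (hc_far k).le) tendsto_natCast_atTop_atTop), hc_ball⟩

end FarBalls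

theorem Topology.IsInducing.notMem_range_of_mapClusterPt {M X : Type*} [TopologicalSpace M]
    [WeaklyLocallyCompactSpace M] [TopologicalSpace X] {e : M → X} (he : IsInducing e)
    {ι : Type*} {l : Filter ι} {c : ι → M} (hc : Tendsto c l (cocompact M)) {p : X}
    (hp : MapClusterPt p l (e ∘ c)) : p ∉ range e := by
  rintro ⟨m, rfl⟩
  have hm : ClusterPt m (map c l) :=
    he.mapClusterPt_iff.1 (by rwa [MapClusterPt, ← map_map] at hp)
  exact (hm.mono hc).ne (disjoint_iff.1 (disjoint_nhds_cocompact m))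

theorem DenseRange.subset_closure_image {M X : Type*} [TopologicalSpace X] {e : M → X}
    (he : DenseRange e) {U : Set X} (hU : IsOpen U) {W : Set M} (hUW : e ⁻¹' U ⊆ W) :
    U ⊆ closure (e '' W) :=
  (Dense.open_subset_closure_inter he hU).trans <| closure_mono <| by
    rintro _ ⟨hxU, x, rfl⟩
    exact ⟨x, hUW hxU, rfl⟩

section Higson

variable {M : Type*} [MetricSpace M] (c : ℕ → M)

noncomputable def tentSupBCF : BoundedContinuousFunction M ℂ :=
  .mkOfBound ⟨fun x => (tentSup c x : ℂ),
    Complex.continuous_ofReal.comp (lipschitzWith_tentSup c).continuous⟩ 1 fun x y => by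
    simpa only [ContinuousMap.coe_mk, Complex.isometry_ofReal.dist_eq] using
      Real.dist_le_of_mem_Icc_01 ⟨tentSup_nonneg c x, tentSup_le_one c x⟩
        ⟨tentSup_nonneg c y, tentSup_le_one c y⟩

theorem tentSupBCF_apply (x : M) : tentSupBCF c x = tentSup c x := rfl

theorem isHigsonFunction_tentSupBCF [ProperSpace M] : IsHigsonFunction (tentSupBCF c) := by
  intro r hr ε hε
  obtain ⟨n, hn⟩ := exists_nat_gt (r / ε)
  refine ⟨⋃ k ∈ Finset.range n, closedBall (c k) (k + 1 + r),
    (Finset.range n).isCompact_biUnion fun k _ => isCompact_closedBall _ _, fun x hx y hxy => ?_⟩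
  simp only [mem_iUnion, Finset.mem_range, mem_closedBall, not_exists, not_le] at hx
  have hosc : ∀ k : ℕ, |tent (c k) (k + 1) x - tent (c k) (k + 1) y| ≤ r / (n + 1) := by
    intro k
    rcases lt_or_ge k n with hk | hk
    · have hx' := hx k hk
      have hy : (k : ℝ) + 1 ≤ dist y (c k) := by linarith [dist_triangle x y (c k)]
      rw [tent_eq_zero (by positivity) (by linarith), tent_eq_zero (by positivity) hy]
      simp only [sub_self, abs_zero]
      positivity
    · exact (abs_tent_sub_tent_le _ (by positivity) x y).trans
        (div_le_div₀ hr.le hxy (by positivity) (by exact_mod_cast Nat.succ_le_succ hk))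
  rw [div_lt_iff₀ hε] at hn
  calc dist (tentSup c x : ℂ) (tentSup c y) = |tentSup c x - tentSup c y| :=
        Complex.isometry_ofReal.dist_eq _ _
    _ ≤ r / (n + 1) := abs_tentSup_sub_tentSup_le c hosc
    _ < ε := by rw [div_lt_iff₀ (by positivity)]; linarith

end Higson

/-- If `M` is a non-compact proper metric space and `W ⊆ M` contains metric balls of
arbitrarily large radius, then the closure of `W` in the Higson compactification `M^ν` is a
neighborhood of some point of the Higson corona `νM = M^ν \ M`. -/
theorem closure_nhd_of_corona_point {M : Type*} [MetricSpace M] [ProperSpace M]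
    (hnc : ¬ CompactSpace M)
    {X : Type*} [TopologicalSpace X] [CompactSpace X] [T2Space X] {e : M → X}
    (h : IsHigsonCompactification M X e)
    (W : Set M) (hW : ∀ r : ℝ, 0 < r → ∃ x : M, Metric.ball x r ⊆ W) :
    ∃ p : X, p ∉ Set.range e ∧ closure (e '' W) ∈ nhds p := by
  have := not_compactSpace_iff.1 hnc
  obtain ⟨c, hc_tendsto, hc_ball⟩ := exists_tendsto_cocompact_ball_subset hW
  obtain ⟨g, hg⟩ := (h.higson (tentSupBCF c)).2 (isHigsonFunction_tentSupBCF c)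
  obtain ⟨p, hp⟩ := exists_clusterPt_of_compactSpace (map (e ∘ c) atTop)
  have hgp : g p = 1 := by
    refine (isClosed_singleton.preimage g.continuous).closure_subset
      (hp.mem_closure_of_mem _ (mem_of_superset range_mem_map ?_))
    rintro _ ⟨k, rfl⟩
    simp [hg, tentSupBCF_apply, tentSup_apply_self]
  have hU : IsOpen (g ⁻¹' {0}ᶜ) := isOpen_compl_singleton.preimage g.continuous
  have hUW : e ⁻¹' (g ⁻¹' {0}ᶜ) ⊆ W := fun x hx => by
    by_contra hxW
    refine hx ?_
    simp only [mem_singleton_iff, hg, tentSupBCF_apply, Complex.ofReal_eq_zero]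
    exact tentSup_eq_zero c fun k hk => hxW (hc_ball k hk)
  refine ⟨p, h.embedding.isInducing.notMem_range_of_mapClusterPt hc_tendsto hp, ?_⟩
  exact mem_of_superset (hU.mem_nhds (by simp [hgp])) (h.dense.subset_closure_image hU hUW)
end

section
/- Let (M,d) be a proper metric space, let (x_n) be a sequence in M with no limit point in M, and let (r_n) be positive reals with r_n → ∞ such that the balls B(x_n, r_n) are pairwise disjoint. Then the function f defined by f(x) = (−1)^n (r_n − d(x,x_n))/r_n on B(x_n,r_n) and f(x) = 0 elsewhere is a continuous Higson function on M. -/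
/-- The function of Proposition 4.9: given a sequence `(x_n)` in a proper metric space with no
limit point and radii `r_n → ∞` with the balls `B(x_n, r_n)` pairwise disjoint, the function
equal to `(−1)^n (r_n − d(x, x_n))/r_n` on `B(x_n, r_n)` and `0` elsewhere is a continuous
Higson function. -/
theorem oscillating_function_is_higson {M : Type*} [MetricSpace M] [ProperSpace M]
    (x : ℕ → M) (hx : ∀ p : M, ¬ MapClusterPt p Filter.atTop x)
    (r : ℕ → ℝ) (hr : ∀ n, 0 < r n) (hr' : Filter.Tendsto r Filter.atTop Filter.atTop)
    (hdisj : Pairwise (Function.onFun Disjoint fun n => Metric.ball (x n) (r n)))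
    (f : M → ℝ)
    (hf : ∀ n : ℕ, ∀ z ∈ Metric.ball (x n) (r n),
      f z = (-1 : ℝ) ^ n * (r n - dist z (x n)) / r n)
    (hf0 : ∀ z : M, (∀ n : ℕ, z ∉ Metric.ball (x n) (r n)) → f z = 0) :
    Continuous f ∧ (∃ C : ℝ, ∀ z : M, |f z| ≤ C) ∧
      (∀ ρ : ℝ, 0 < ρ → ∀ ε : ℝ, 0 < ε → ∃ K : Set M, IsCompact K ∧
        ∀ z ∉ K, ∀ y : M, dist z y ≤ ρ → |f z - f y| < ε) := by
  classical
  -- formula for |f z| on a ball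
  have habs : ∀ n : ℕ, ∀ z ∈ Metric.ball (x n) (r n),
      |f z| = (r n - dist z (x n)) / r n := by
    intro n z hz
    have hz' : dist z (x n) < r n := Metric.mem_ball.mp hz
    rw [hf n z hz, abs_div, abs_mul, abs_pow, abs_neg, abs_one, one_pow, one_mul,
      abs_of_nonneg (by linarith : (0:ℝ) ≤ r n - dist z (x n)), abs_of_pos (hr n)]
  -- if z is in ball n and y is not, then |f z| ≤ dist z y / r n
  have hout : ∀ (n : ℕ) (z y : M), z ∈ Metric.ball (x n) (r n) →
      y ∉ Metric.ball (x n) (r n) → |f z| ≤ dist z y / r n := by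
    intro n z y hz hy
    rw [habs n z hz]
    have h1 : r n ≤ dist y (x n) := by simpa [Metric.mem_ball, not_lt] using hy
    have h2 : dist y (x n) ≤ dist y z + dist z (x n) := dist_triangle _ _ _
    have h3 : r n - dist z (x n) ≤ dist z y := by rw [dist_comm z y]; linarith
    gcongr
    exact (hr n).le
  -- the key estimate
  have key : ∀ s : ℝ, 0 < s → ∀ z y : M,
      (∀ n, z ∈ Metric.ball (x n) (r n) → s ≤ r n) →
      (∀ n, y ∈ Metric.ball (x n) (r n) → s ≤ r n) →
      |f z - f y| ≤ 2 * dist z y / s := by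
    intro s hs z y hzs hys
    have hd : (0:ℝ) ≤ dist z y := dist_nonneg
    by_cases hz : ∃ n, z ∈ Metric.ball (x n) (r n)
    · obtain ⟨n, hzn⟩ := hz
      have hsn : s ≤ r n := hzs n hzn
      by_cases hy : ∃ m, y ∈ Metric.ball (x m) (r m)
      · obtain ⟨m, hym⟩ := hy
        have hsm : s ≤ r m := hys m hym
        by_cases hnm : n = m
        · subst hnm
          have heq : f z - f y = (-1 : ℝ) ^ n * (dist y (x n) - dist z (x n)) / r n := by
            rw [hf n z hzn, hf n y hym]; ring
          have : |f z - f y| = |dist y (x n) - dist z (x n)| / r n := by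
            rw [heq, abs_div, abs_mul, abs_pow, abs_neg, abs_one, one_pow, one_mul,
              abs_of_pos (hr n)]
          rw [this]
          have h4 : |dist y (x n) - dist z (x n)| ≤ dist y z := abs_dist_sub_le y z (x n)
          have h5 : |dist y (x n) - dist z (x n)| / r n ≤ dist z y / s := by
            rw [dist_comm z y]
            exact div_le_div₀ dist_nonneg h4 hs hsn
          have h6 : dist z y / s ≤ 2 * dist z y / s := by
            apply div_le_div_of_nonneg_right (by linarith) hs.le
          linarith
        · -- different balls
          have hzm : z ∉ Metric.ball (x m) (r m) := fun h =>
            Set.disjoint_left.mp (hdisj hnm) hzn h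
          have hyn : y ∉ Metric.ball (x n) (r n) := fun h =>
            Set.disjoint_left.mp (hdisj hnm) h hym
          have e1 : |f z| ≤ dist z y / r n := hout n z y hzn hyn
          have e2 : |f y| ≤ dist y z / r m := hout m y z hym hzm
          have e1' : dist z y / r n ≤ dist z y / s := by gcongr
          have e2' : dist y z / r m ≤ dist z y / s := by rw [dist_comm y z]; gcongr
          calc |f z - f y| ≤ |f z| + |f y| := abs_sub _ _
            _ ≤ dist z y / s + dist z y / s := by linarith
            _ = 2 * dist z y / s := by ring
      · push_neg at hy
        have hfy : f y = 0 := hf0 y hy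
        have e1 : |f z| ≤ dist z y / r n := hout n z y hzn (hy n)
        have e1' : dist z y / r n ≤ dist z y / s := by gcongr
        have h6 : dist z y / s ≤ 2 * dist z y / s := by
          apply div_le_div_of_nonneg_right (by linarith) hs.le
        rw [hfy, sub_zero]
        linarith
    · push_neg at hz
      have hfz : f z = 0 := hf0 z hz
      by_cases hy : ∃ m, y ∈ Metric.ball (x m) (r m)
      · obtain ⟨m, hym⟩ := hy
        have hsm : s ≤ r m := hys m hym
        have e2 : |f y| ≤ dist y z / r m := hout m y z hym (hz m)
        have e2' : dist y z / r m ≤ dist z y / s := by rw [dist_comm y z]; gcongr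
        have h6 : dist z y / s ≤ 2 * dist z y / s := by
          apply div_le_div_of_nonneg_right (by linarith) hs.le
        rw [hfz, zero_sub, abs_neg]
        linarith
      · push_neg at hy
        rw [hfz, hf0 y hy, sub_zero, abs_zero]
        positivity
  -- a uniform positive lower bound on r
  obtain ⟨N, hN⟩ : ∃ N, ∀ n ≥ N, (1:ℝ) ≤ r n :=
    Filter.eventually_atTop.mp (hr'.eventually_ge_atTop 1)
  set c : ℝ := min 1 ((Finset.range (N + 1)).inf' (by simp) r) with hc
  have hc0 : 0 < c := by
    apply lt_min one_pos
    rw [Finset.lt_inf'_iff]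
    intro i _
    exact hr i
  have hcle : ∀ n, c ≤ r n := by
    intro n
    rcases le_or_gt n N with h | h
    · exact (min_le_right _ _).trans
        (Finset.inf'_le r (Finset.mem_range.mpr (Nat.lt_succ_of_le h)))
    · exact (min_le_left _ _).trans (hN n h.le)
  refine ⟨?_, ⟨1, ?_⟩, ?_⟩
  · -- continuity
    rw [Metric.continuous_iff]
    intro z ε hε
    refine ⟨ε * c / 4, by positivity, fun y hy => ?_⟩
    have h1 : |f y - f z| ≤ 2 * dist y z / c :=
      key c hc0 y z (fun n _ => hcle n) (fun n _ => hcle n)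
    have h2 : 2 * dist y z / c < 2 * (ε * c / 4) / c := by gcongr
    have h3 : 2 * (ε * c / 4) / c = ε / 2 := by field_simp; ring
    rw [Real.dist_eq]
    linarith
  · -- boundedness
    intro z
    by_cases hz : ∃ n, z ∈ Metric.ball (x n) (r n)
    · obtain ⟨n, hzn⟩ := hz
      rw [habs n z hzn]
      rw [div_le_one (hr n)]
      have := dist_nonneg (x := z) (y := x n)
      linarith
    · push_neg at hz
      rw [hf0 z hz, abs_zero]
      exact zero_le_one
  · -- Higson condition
    intro ρ hρ ε hε
    set s : ℝ := 2 * ρ / ε + 1 with hsdef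
    have hs0 : 0 < s := by positivity
    have hBfin : {n : ℕ | r n < s}.Finite := by
      obtain ⟨N', hN'⟩ : ∃ N', ∀ n ≥ N', s ≤ r n :=
        Filter.eventually_atTop.mp (hr'.eventually_ge_atTop s)
      apply (Set.finite_Iio N').subset
      intro n hn
      simp only [Set.mem_setOf_eq] at hn
      by_contra h
      exact absurd (hN' n (not_lt.mp (by simpa using h))) (not_le.mpr hn)
    refine ⟨⋃ n ∈ {n : ℕ | r n < s}, Metric.closedBall (x n) (r n + ρ),
      hBfin.isCompact_biUnion (fun n _ => isCompact_closedBall _ _), ?_⟩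
    intro z hz y hzy
    have hzK : ∀ n, r n < s → z ∉ Metric.closedBall (x n) (r n + ρ) := by
      intro n hn hmem
      exact hz (Set.mem_biUnion hn hmem)
    have hzs : ∀ n, z ∈ Metric.ball (x n) (r n) → s ≤ r n := by
      intro n hn
      by_contra h
      push_neg at h
      exact hzK n h (Metric.closedBall_subset_closedBall (by linarith)
        (Metric.ball_subset_closedBall hn))
    have hys : ∀ n, y ∈ Metric.ball (x n) (r n) → s ≤ r n := by
      intro n hn
      by_contra h
      push_neg at h
      apply hzK n h
      rw [Metric.mem_closedBall]
      have h1 : dist y (x n) < r n := Metric.mem_ball.mp hn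
      calc dist z (x n) ≤ dist z y + dist y (x n) := dist_triangle _ _ _
        _ ≤ ρ + r n := by linarith
        _ = r n + ρ := by ring
    have h1 : |f z - f y| ≤ 2 * dist z y / s := key s hs0 z y hzs hys
    have h2 : 2 * dist z y / s ≤ 2 * ρ / s := by gcongr
    have h3 : 2 * ρ / s < ε := by
      rw [div_lt_iff₀ hs0, hsdef]
      have : 0 < 2 * ρ / ε := by positivity
      calc 2 * ρ = ε * (2 * ρ / ε) := by field_simp
        _ < ε * (2 * ρ / ε + 1) := by nlinarith
    linarith
end
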